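/- Race conditions make parallel composition inexecutable: for every p ∈ ℙ, the formulas [+p ∥ −p]⊥, [+p ∥ +p]⊥, and [p?ⁿ ∥ +p]⊥ are all valid; equivalently, for no models M, M' does M⟦+p ∥ −p⟧M', M⟦+p ∥ +p⟧M', or M⟦p?ⁿ ∥ +p⟧M' hold. -/

import Mathlib

set_option maxHeartbeats 1000000

/-- Propositional variables. -/
abbrev PVar := ℕ

/-- A DL-PA∥ model: readable variables `R`, writable variables `W`,
valuation `V`, with writability implying readability. -/
@[ext]
structure Model where
  R : Set PVar
  W : Set PVar
  V : Set PVar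
  sub : W ⊆ R

mutual
/-- Formulas of DL-PA∥. -/
inductive Formula : Type where
  | atom : PVar → Formula
  | top  : Formula
  | neg  : Formula → Formula
  | or   : Formula → Formula → Formula
  | dia  : Program → Formula → Formula
/-- Programs of DL-PA∥. -/
inductive Program : Type where
  | assignT : PVar → Program   -- +p
  | assignF : PVar → Program   -- −p
  | addR : PVar → Program      -- +r p
  | remR : PVar → Program      -- −r p
  | addW : PVar → Program      -- +w p
  | remW : PVar → Program      -- −w p
  | testEx : Formula → Program -- exogenous test φ?
  | testEn : Formula → Program -- endogenous test φ?ⁿ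
  | seq : Program → Program → Program
  | choice : Program → Program → Program
  | star : Program → Program
  | par : Program → Program → Program
end

/-- RW-disjointness. -/
def RWdisjoint (M1 M2 : Model) : Prop :=
  M1.W ∩ M2.R = ∅ ∧ M2.W ∩ M1.R = ∅

/-- Split relation `M ◁ (M₁,M₂)`. -/
def SplitRel (M M1 M2 : Model) : Prop :=
  RWdisjoint M1 M2 ∧ M.R = M1.R ∪ M2.R ∧ M.W = M1.W ∪ M2.W ∧ M.V = M1.V ∧ M.V = M2.V

/-- Merge relation `M ▷ (M₁,M₂)`. -/
def MergeRel (M M1 M2 : Model) : Prop :=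
  RWdisjoint M1 M2 ∧ M.R = M1.R ∪ M2.R ∧ M.W = M1.W ∪ M2.W ∧
  M1.V \ M.W = M2.V \ M.W ∧ M.V = (M1.V ∩ M1.W) ∪ (M2.V ∩ M2.W) ∪ (M1.V ∩ M2.V)

/-- Indistinguishability `M ∼ M'`. -/
def Indist (M M' : Model) : Prop :=
  M.R = M'.R ∧ M.W = M'.W ∧ M.V ∩ M.R = M'.V ∩ M'.R

mutual
/-- Truth of a formula in a model. -/
def Sat : Model → Formula → Prop
  | M, .atom p => p ∈ M.V
  | _, .top => True
  | M, .neg φ => ¬ Sat M φ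
  | M, .or φ ψ => Sat M φ ∨ Sat M ψ
  | M, .dia π φ => ∃ M', Interp π M M' ∧ Sat M' φ
/-- Interpretation of programs as relations between models. -/
def Interp : Program → Model → Model → Prop
  | .assignT p, M, M' => M'.R = M.R ∧ M'.W = M.W ∧ M'.V = M.V ∪ {p} ∧ p ∈ M.W
  | .assignF p, M, M' => M'.R = M.R ∧ M'.W = M.W ∧ M'.V = M.V \ {p} ∧ p ∈ M.W
  | .addR p, M, M' => M'.R = M.R ∪ {p} ∧ M'.W = M.W ∧ M'.V = M.V
  | .remR p, M, M' => M'.R = M.R \ {p} ∧ M'.W = M.W \ {p} ∧ M'.V = M.V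
  | .addW p, M, M' => M'.R = M.R ∪ {p} ∧ M'.W = M.W ∪ {p} ∧ M'.V = M.V
  | .remW p, M, M' => M'.R = M.R ∧ M'.W = M.W \ {p} ∧ M'.V = M.V
  | .testEx φ, M, M' => M = M' ∧ Sat M φ
  | .testEn φ, M, M' => M = M' ∧ ∀ M'', Indist M'' M → Sat M'' φ
  | .seq π1 π2, M, M' => ∃ M'', Interp π1 M M'' ∧ Interp π2 M'' M'
  | .choice π1 π2, M, M' => Interp π1 M M' ∨ Interp π2 M M'
  | .star π, M, M' => Relation.ReflTransGen (fun A B => Interp π A B) M M'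
  | .par π1 π2, M, M' => ∃ M1 M2 M1' M2',
      SplitRel M M1 M2 ∧ MergeRel M' M1' M2' ∧
      Interp π1 M1 M1' ∧ Interp π2 M2 M2' ∧
      M1.R = M1'.R ∧ M1.W = M1'.W ∧ M1.V \ M1.W = M1'.V \ M1'.W ∧
      M2.R = M2'.R ∧ M2.W = M2'.W ∧ M2.V \ M2.W = M2'.V \ M2'.W
end

mutual
/-- Propositional variables occurring in a formula. -/
def varsF : Formula → Finset PVar
  | .atom p => {p}
  | .top => ∅
  | .neg φ => varsF φ
  | .or φ ψ => varsF φ ∪ varsF ψ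
  | .dia π φ => varsP π ∪ varsF φ
/-- Propositional variables occurring in a program. -/
def varsP : Program → Finset PVar
  | .assignT p => {p}
  | .assignF p => {p}
  | .addR p => {p}
  | .remR p => {p}
  | .addW p => {p}
  | .remW p => {p}
  | .testEx φ => varsF φ
  | .testEn φ => varsF φ
  | .seq π1 π2 => varsP π1 ∪ varsP π2
  | .choice π1 π2 => varsP π1 ∪ varsP π2
  | .star π => varsP π
  | .par π1 π2 => varsP π1 ∪ varsP π2
end

/-- `⊥`. -/
def botF : Formula := .neg .top
/-- Conjunction. -/
def andF (φ ψ : Formula) : Formula := .neg (.or (.neg φ) (.neg ψ))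
/-- Implication. -/
def impF (φ ψ : Formula) : Formula := .or (.neg φ) ψ
/-- Bi-implication. -/
def iffF (φ ψ : Formula) : Formula := andF (impF φ ψ) (impF ψ φ)
/-- `[π]φ`. -/
def boxF (π : Program) (φ : Formula) : Formula := .neg (.dia π (.neg φ))
/-- `w(p)`: `p` is writable. -/
def wF (p : PVar) : Formula := .dia (.assignT p) .top
/-- `r(p)`: `p` is readable. -/
def rF (p : PVar) : Formula :=
  .or (.dia (.testEn (.atom p)) .top) (.dia (.testEn (.neg (.atom p))) .top)

/-- Restriction `M ∩ P` of a model to a set of variables. -/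
def interModel (M : Model) (P : Set PVar) : Model :=
  ⟨M.R ∩ P, M.W ∩ P, M.V ∩ P, Set.inter_subset_inter M.sub (subset_refl P)⟩

/-- A formula is valid iff true in every model. -/
def Valid (φ : Formula) : Prop := ∀ M : Model, Sat M φ

/-!
Both components of a parallel composition run on the same variables, but the split
`M ◁ (M₁,M₂)` requires that neither component reads what the other writes. Assigning `p`
needs `p` writable, hence readable; testing `p` endogenously needs `p` readable, since
otherwise making the unreadable `p` false gives an indistinguishable model where the
test fails. So in each of the three programs one side writes `p` while the other reads it.
-/

theorem RWdisjoint.not_mem_R_right {M₁ M₂ : Model} {p : PVar} (h : RWdisjoint M₁ M₂)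
    (hp : p ∈ M₁.W) : p ∉ M₂.R :=
  fun hp' => (Set.eq_empty_iff_forall_notMem.mp h.1 p) ⟨hp, hp'⟩

theorem RWdisjoint.not_mem_R_left {M₁ M₂ : Model} {p : PVar} (h : RWdisjoint M₁ M₂)
    (hp : p ∈ M₂.W) : p ∉ M₁.R :=
  fun hp' => (Set.eq_empty_iff_forall_notMem.mp h.2 p) ⟨hp, hp'⟩

theorem mem_W_of_interp_assignT {p : PVar} {M M' : Model}
    (h : Interp (.assignT p) M M') : p ∈ M.W :=
  h.2.2.2

theorem mem_W_of_interp_assignF {p : PVar} {M M' : Model}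
    (h : Interp (.assignF p) M M') : p ∈ M.W :=
  h.2.2.2

def Model.eraseV (M : Model) (p : PVar) : Model :=
  ⟨M.R, M.W, M.V \ {p}, M.sub⟩

theorem indist_eraseV {M : Model} {p : PVar} (hp : p ∉ M.R) : Indist (M.eraseV p) M := by
  refine ⟨rfl, rfl, ?_⟩
  ext x
  simp only [Model.eraseV, Set.mem_inter_iff, Set.mem_sdiff, Set.mem_singleton_iff]
  exact ⟨fun ⟨⟨hv, _⟩, hr⟩ => ⟨hv, hr⟩, fun ⟨hv, hr⟩ => ⟨⟨hv, by rintro rfl; exact hp hr⟩, hr⟩⟩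

theorem mem_R_of_interp_testEn_atom {p : PVar} {M M' : Model}
    (h : Interp (.testEn (.atom p)) M M') : p ∈ M.R := by
  by_contra hp
  have hsat : p ∈ (M.eraseV p).V := h.2 _ (indist_eraseV hp)
  exact hsat.2 rfl

section Par

variable {π₁ π₂ : Program} {p : PVar}

theorem not_interp_par_of_writes_reads
    (hw : ∀ M M', Interp π₁ M M' → p ∈ M.W) (hr : ∀ M M', Interp π₂ M M' → p ∈ M.R)
    (M M' : Model) : ¬ Interp (.par π₁ π₂) M M' := by
  rintro ⟨M₁, M₂, M₁', M₂', ⟨hdisj, -⟩, -, h₁, h₂, -⟩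
  exact hdisj.not_mem_R_right (hw _ _ h₁) (hr _ _ h₂)

theorem not_interp_par_of_reads_writes
    (hr : ∀ M M', Interp π₁ M M' → p ∈ M.R) (hw : ∀ M M', Interp π₂ M M' → p ∈ M.W)
    (M M' : Model) : ¬ Interp (.par π₁ π₂) M M' := by
  rintro ⟨M₁, M₂, M₁', M₂', ⟨hdisj, -⟩, -, h₁, h₂, -⟩
  exact hdisj.not_mem_R_left (hw _ _ h₂) (hr _ _ h₁)

end Par

theorem sat_boxF_botF_iff {π : Program} {M : Model} :
    Sat M (boxF π botF) ↔ ∀ M', ¬ Interp π M M' := by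
  simp only [boxF, botF, Sat, not_true_eq_false, not_false_eq_true, and_true, not_exists]

/-- Race conditions make parallel composition inexecutable:
`[+p ∥ −p]⊥`, `[+p ∥ +p]⊥` and `[p?ⁿ ∥ +p]⊥` are valid; equivalently, the
corresponding parallel programs relate no pair of models. -/
theorem race_conditions_inexecutable (p : PVar) :
    (∀ M : Model, Sat M (boxF (.par (.assignT p) (.assignF p)) botF)) ∧
    (∀ M : Model, Sat M (boxF (.par (.assignT p) (.assignT p)) botF)) ∧
    (∀ M : Model, Sat M (boxF (.par (.testEn (.atom p)) (.assignT p)) botF)) ∧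
    (∀ M M' : Model, ¬ Interp (.par (.assignT p) (.assignF p)) M M') ∧
    (∀ M M' : Model, ¬ Interp (.par (.assignT p) (.assignT p)) M M') ∧
    (∀ M M' : Model, ¬ Interp (.par (.testEn (.atom p)) (.assignT p)) M M') := by
  have hwrite : ∀ M M', Interp (.assignT p) M M' → p ∈ M.W :=
    fun _ _ h => mem_W_of_interp_assignT h
  have hread : ∀ M M', Interp (.assignF p) M M' → p ∈ M.R :=
    fun M _ h => M.sub (mem_W_of_interp_assignF h)
  have hread' : ∀ M M', Interp (.assignT p) M M' → p ∈ M.R :=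
    fun M _ h => M.sub (mem_W_of_interp_assignT h)
  have h₁ := not_interp_par_of_writes_reads hwrite hread
  have h₂ := not_interp_par_of_writes_reads hwrite hread'
  have h₃ := not_interp_par_of_reads_writes
    (fun _ _ h => mem_R_of_interp_testEn_atom h) hwrite
  exact ⟨fun M => sat_boxF_botF_iff.2 (h₁ M), fun M => sat_boxF_botF_iff.2 (h₂ M),
    fun M => sat_boxF_botF_iff.2 (h₃ M), h₁, h₂, h₃⟩
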